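/- arXiv:1203.1061 — 2 statements merged into one kernel-verified Lean document; each statement's English description precedes it below -/
import Mathlib

section
/- With G the parametrized Gram matrix with entries Gᵢᵢ = 1, G₁₂ = -(a₁+1/a₁)/2, G₁₃ = -(a₂+1/a₂)/2, G₁₄ = -(a₆+1/a₆)/2, G₂₃ = -(a₃+1/a₃)/2, G₂₄ = -(a₅+1/a₅)/2, G₃₄ = -(a₄+1/a₄)/2, and cᵢⱼ its cofactors, Δ = det G, one has c₁₂² - c₁₁c₂₂ = Δ·((a₄ - 1/a₄)/2)². -/
open Matrix

/-- The `(i,j)` cofactor of a `4×4` matrix: `(-1)^{i+j}` times the determinant of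
the `3×3` minor obtained by deleting row `i` and column `j`. -/
noncomputable def cofactor (G : Matrix (Fin 4) (Fin 4) ℂ) (i j : Fin 4) : ℂ :=
  (-1) ^ ((i : ℕ) + (j : ℕ)) * (G.submatrix i.succAbove j.succAbove).det

section aux

variable (b₁ b₂ b₃ b₄ b₅ b₆ : ℂ)

private def M (b₁ b₂ b₃ b₄ b₅ b₆ : ℂ) : Matrix (Fin 4) (Fin 4) ℂ :=
  !![(1:ℂ), b₁, b₂, b₆; b₁, 1, b₃, b₅; b₂, b₃, 1, b₄; b₆, b₅, b₄, 1]

private lemma sub01 : (M b₁ b₂ b₃ b₄ b₅ b₆).submatrix (0:Fin 4).succAbove (1:Fin 4).succAbove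
    = !![b₁, b₃, b₅; b₂, 1, b₄; b₆, b₄, 1] := by
  ext i j; fin_cases i <;> fin_cases j <;> rfl

private lemma sub00 : (M b₁ b₂ b₃ b₄ b₅ b₆).submatrix (0:Fin 4).succAbove (0:Fin 4).succAbove
    = !![(1:ℂ), b₃, b₅; b₃, 1, b₄; b₅, b₄, 1] := by
  ext i j; fin_cases i <;> fin_cases j <;> rfl

private lemma sub11 : (M b₁ b₂ b₃ b₄ b₅ b₆).submatrix (1:Fin 4).succAbove (1:Fin 4).succAbove
    = !![(1:ℂ), b₂, b₆; b₂, 1, b₄; b₆, b₄, 1] := by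
  ext i j; fin_cases i <;> fin_cases j <;> rfl

set_option maxHeartbeats 1000000 in
private lemma detM : (M b₁ b₂ b₃ b₄ b₅ b₆).det
    = 1*(1*(1*1-b₄*b₄) - b₃*(b₃*1-b₄*b₅) + b₅*(b₃*b₄-1*b₅))
      - b₁*(b₁*(1*1-b₄*b₄) - b₃*(b₂*1-b₄*b₆) + b₅*(b₂*b₄-1*b₆))
      + b₂*(b₁*(b₃*1-b₄*b₅) - 1*(b₂*1-b₄*b₆) + b₅*(b₂*b₅-b₃*b₆))
      - b₆*(b₁*(b₃*b₄-1*b₅) - 1*(b₂*b₄-1*b₆) + b₃*(b₂*b₅-b₃*b₆)) := by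
  have s0 : (M b₁ b₂ b₃ b₄ b₅ b₆).submatrix Fin.succ (0:Fin 4).succAbove
      = !![(1:ℂ), b₃, b₅; b₃, 1, b₄; b₅, b₄, 1] := by
    ext i j; fin_cases i <;> fin_cases j <;> rfl
  have s1 : (M b₁ b₂ b₃ b₄ b₅ b₆).submatrix Fin.succ (1:Fin 4).succAbove
      = !![b₁, b₃, b₅; b₂, 1, b₄; b₆, b₄, 1] := by
    ext i j; fin_cases i <;> fin_cases j <;> rfl
  have s2 : (M b₁ b₂ b₃ b₄ b₅ b₆).submatrix Fin.succ (2:Fin 4).succAbove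
      = !![b₁, 1, b₅; b₂, b₃, b₄; b₆, b₅, 1] := by
    ext i j; fin_cases i <;> fin_cases j <;> rfl
  have s3 : (M b₁ b₂ b₃ b₄ b₅ b₆).submatrix Fin.succ (3:Fin 4).succAbove
      = !![b₁, 1, b₃; b₂, b₃, 1; b₆, b₅, b₄] := by
    ext i j; fin_cases i <;> fin_cases j <;> rfl
  rw [Matrix.det_succ_row_zero, Fin.sum_univ_four, s0, s1, s2, s3,
    Matrix.det_fin_three, Matrix.det_fin_three, Matrix.det_fin_three, Matrix.det_fin_three]
  simp only [M, Matrix.cons_val_zero, Matrix.cons_val_one, Matrix.head_cons, Matrix.cons_val_two,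
    Matrix.tail_cons, Matrix.head_fin_const, Matrix.cons_val', Matrix.empty_val',
    Matrix.cons_val_fin_one, Matrix.cons_val_three, Fin.val_zero, Fin.val_one, Fin.val_two, Matrix.of_apply]
  norm_num [show ((3:Fin 4):ℕ) = 3 from rfl]
  ring

set_option maxHeartbeats 1000000 in
private lemma key :
    (cofactor (M b₁ b₂ b₃ b₄ b₅ b₆) 0 1) ^ 2
      - cofactor (M b₁ b₂ b₃ b₄ b₅ b₆) 0 0 * cofactor (M b₁ b₂ b₃ b₄ b₅ b₆) 1 1
    = (M b₁ b₂ b₃ b₄ b₅ b₆).det * (b₄ ^ 2 - 1) := by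
  rw [cofactor, cofactor, cofactor, sub01, sub00, sub11, detM, Matrix.det_fin_three,
    Matrix.det_fin_three, Matrix.det_fin_three]
  simp only [Matrix.cons_val_zero, Matrix.cons_val_one, Matrix.head_cons, Matrix.cons_val_two,
    Matrix.tail_cons, Matrix.head_fin_const, Matrix.cons_val', Matrix.empty_val',
    Matrix.cons_val_fin_one, Fin.val_zero, Fin.val_one, Matrix.of_apply]
  norm_num
  ring

end aux

/-- Jacobi's identity `c₁₂² - c₁₁c₂₂ = Δ·((a₄ - 1/a₄)/2)²` for the parametrized
Gram matrix of a generalized hyperbolic tetrahedron. -/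
theorem jacobi_identity_c12
    (a₁ a₂ a₃ a₄ a₅ a₆ : ℂ)
    (h₁ : a₁ ≠ 0) (h₂ : a₂ ≠ 0) (h₃ : a₃ ≠ 0) (h₄ : a₄ ≠ 0) (h₅ : a₅ ≠ 0) (h₆ : a₆ ≠ 0)
    (G : Matrix (Fin 4) (Fin 4) ℂ)
    (hG : G = !![1, -(a₁ + 1/a₁)/2, -(a₂ + 1/a₂)/2, -(a₆ + 1/a₆)/2;
                 -(a₁ + 1/a₁)/2, 1, -(a₃ + 1/a₃)/2, -(a₅ + 1/a₅)/2;
                 -(a₂ + 1/a₂)/2, -(a₃ + 1/a₃)/2, 1, -(a₄ + 1/a₄)/2;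
                 -(a₆ + 1/a₆)/2, -(a₅ + 1/a₅)/2, -(a₄ + 1/a₄)/2, 1]) :
    (cofactor G 0 1) ^ 2 - cofactor G 0 0 * cofactor G 1 1
      = G.det * ((a₄ - 1/a₄)/2) ^ 2 := by
  have hGM : G = M (-(a₁ + 1/a₁)/2) (-(a₂ + 1/a₂)/2) (-(a₃ + 1/a₃)/2) (-(a₄ + 1/a₄)/2)
      (-(a₅ + 1/a₅)/2) (-(a₆ + 1/a₆)/2) := hG
  rw [hGM, key]
  congr 1
  field_simp
  ring
end

section
/- Let q₀ = 1 + a₁a₂a₃ + a₁a₅a₆ + a₂a₄a₆ + a₃a₄a₅ + a₁a₂a₄a₅ + a₁a₃a₄a₆ + a₂a₃a₅a₆ and let 𝒴 be the explicit polynomial of the Appendix with 𝒴|_{a₁=a₆=0} = a₂³a₃a₄a₅(a₃a₄+a₅). Then 𝒴 is not expressible as a polynomial in q₀, q₁, q₂ (with q₁, q₂ as defined in the paper, both vanishing at a₁ = a₆ = 0): concretely, since q₁|_{a₁=a₆=0} = q₂|_{a₁=a₆=0} = 0 and q₀|_{a₁=a₆=0} = 1 + a₃a₄a₅ depends only on a₃a₄a₅,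 but 𝒴|_{a₁=a₆=0} = a₂³a₃a₄a₅(a₃a₄+a₅) is not a function of a₃a₄a₅ alone, no polynomial P satisfies 𝒴 = P(q₀,q₁,q₂) identically. -/
set_option maxHeartbeats 2000000 in
/-- The technical polynomial `𝒴` from the Appendix of Kolpakov–Murakami
(equation (eqYTerm)). -/
noncomputable def Yterm (a1 a2 a3 a4 a5 a6 : ℂ) : ℂ :=
  a1*a2^2*a3*a4^2*a5 + a1^2*a2*a3^2*a4^2*a5 + a2^3*a3^2*a4^2*a5 + a1*a2^2*a3^3*a4^2*a5
  + a1*a2^2*a4*a5^2 + a1^2*a2*a3*a4*a5^2 + a2^3*a3*a4*a5^2 + a1*a2^2*a3^2*a4*a5^2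
  + a1^2*a2^2*a3*a4^2*a6 + a1*a2*a3^2*a4^2*a6 + a1*a2^3*a3^2*a4^2*a6 + a2^2*a3^3*a4^2*a6
  + a1^2*a2^2*a4*a5*a6 + a1*a2*a3*a4*a5*a6 + a1^3*a2*a3*a4*a5*a6 + a1*a2^3*a3*a4*a5*a6
  + a1^2*a3^2*a4*a5*a6 + 2*a2^2*a3^2*a4*a5*a6 - a1^2*a2^2*a3^2*a4*a5*a6
  + a1^4*a2^2*a3^2*a4*a5*a6 + a1*a2*a3^3*a4*a5*a6 + a1*a2*a3*a4^3*a5*a6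
  - a1^3*a2*a3*a4^3*a5*a6 + a2^2*a3^2*a4^3*a5*a6 - a1^2*a2^2*a3^2*a4^3*a5*a6
  + a2^2*a3*a5^2*a6 - a1^2*a2^2*a3*a5^2*a6 + a1*a2*a3^2*a5^2*a6 - a1^3*a2*a3^2*a5^2*a6
  + a1*a2*a4^2*a5^2*a6 + a1^2*a3*a4^2*a5^2*a6 + 2*a2^2*a3*a4^2*a5^2*a6
  - a1^2*a2^2*a3*a4^2*a5^2*a6 + a1^4*a2^2*a3*a4^2*a5^2*a6 + a1*a2*a3^2*a4^2*a5^2*a6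
  + a1^3*a2*a3^2*a4^2*a5^2*a6 + a1*a2^3*a3^2*a4^2*a5^2*a6 + a1^2*a2^2*a3^3*a4^2*a5^2*a6
  + a2^2*a4*a5^3*a6 + a1*a2*a3*a4*a5^3*a6 + a1*a2^3*a3*a4*a5^3*a6 + a1^2*a2^2*a3^2*a4*a5^3*a6
  + a1^2*a2*a3*a4*a6^2 + a1*a3^2*a4*a6^2 + a1*a2^2*a3^2*a4*a6^2 + a2*a3^3*a4*a6^2
  + a1*a2^2*a3*a5*a6^2 - a1^3*a2^2*a3*a5*a6^2 + a2*a3^2*a5*a6^2 - a1^2*a2*a3^2*a5*a6^2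
  + a1^2*a2*a4^2*a5*a6^2 + a1*a3*a4^2*a5*a6^2 + a1*a2^2*a3*a4^2*a5*a6^2
  + a1^3*a2^2*a3*a4^2*a5*a6^2 + 2*a2*a3^2*a4^2*a5*a6^2 - a1^2*a2*a3^2*a4^2*a5*a6^2
  + a1^4*a2*a3^2*a4^2*a5*a6^2 + a1^2*a2^3*a3^2*a4^2*a5*a6^2 + a1*a2^2*a3^3*a4^2*a5*a6^2
  + a1*a2^2*a4*a5^2*a6^2 + 2*a2*a3*a4*a5^2*a6^2 - a1^2*a2*a3*a4*a5^2*a6^2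
  + a1^4*a2*a3*a4*a5^2*a6^2 + a1^2*a2^3*a3*a4*a5^2*a6^2 + a1*a3^2*a4*a5^2*a6^2
  + a1*a2^2*a3^2*a4*a5^2*a6^2 + a1^3*a2^2*a3^2*a4*a5^2*a6^2 + a1^2*a2*a3^3*a4*a5^2*a6^2
  + a2*a3*a4^3*a5^2*a6^2 - a1^2*a2*a3*a4^3*a5^2*a6^2 + a1*a2^2*a3^2*a4^3*a5^2*a6^2
  - a1^3*a2^2*a3^2*a4^3*a5^2*a6^2 + a2*a4^2*a5^3*a6^2 + a1*a3*a4^2*a5^3*a6^2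
  + a1*a2^2*a3*a4^2*a5^3*a6^2 + a1^2*a2*a3^2*a4^2*a5^3*a6^2 + a1*a2*a3*a4*a5*a6^3
  + a3^2*a4*a5*a6^3 + a1^2*a2^2*a3^2*a4*a5*a6^3 + a1*a2*a3^3*a4*a5*a6^3
  + a1*a2*a4^2*a5^2*a6^3 + a3*a4^2*a5^2*a6^3 + a1^2*a2^2*a3*a4^2*a5^2*a6^3
  + a1*a2*a3^2*a4^2*a5^2*a6^3

/-- The coefficient `q₀` of the critical-point quadratic. -/
noncomputable def q0 (a1 a2 a3 a4 a5 a6 : ℂ) : ℂ :=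
  1 + a1*a2*a3 + a1*a5*a6 + a2*a4*a6 + a3*a4*a5 + a1*a2*a4*a5 + a1*a3*a4*a6 + a2*a3*a5*a6

/-- The coefficient `q₁` of the critical-point quadratic. -/
noncomputable def q1 (a1 a2 a3 a4 a5 a6 : ℂ) : ℂ :=
  -(a1*a2*a3*a4*a5*a6) *
    ((a1 - 1/a1)*(a4 - 1/a4) + (a2 - 1/a2)*(a5 - 1/a5) + (a3 - 1/a3)*(a6 - 1/a6))

/-- The coefficient `q₂` of the critical-point quadratic. -/
noncomputable def q2 (a1 a2 a3 a4 a5 a6 : ℂ) : ℂ :=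
  a1*a2*a3*a4*a5*a6 *
    (a1*a4 + a2*a5 + a3*a6 + a1*a2*a6 + a1*a3*a5 + a2*a3*a4 + a4*a5*a6 + a1*a2*a3*a4*a5*a6)

/-- Lemma (lemmaTechnicalTerm): `𝒴` is not expressible as a polynomial in
`q₀, q₁, q₂`. -/
theorem Yterm_not_polynomial_in_q :
    ¬ ∃ P : MvPolynomial (Fin 3) ℂ,
      ∀ a1 a2 a3 a4 a5 a6 : ℂ, a1 ≠ 0 → a2 ≠ 0 → a3 ≠ 0 → a4 ≠ 0 → a5 ≠ 0 → a6 ≠ 0 →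
        Yterm a1 a2 a3 a4 a5 a6 =
          MvPolynomial.eval
            ![q0 a1 a2 a3 a4 a5 a6, q1 a1 a2 a3 a4 a5 a6, q2 a1 a2 a3 a4 a5 a6] P := by
  rintro ⟨P, h⟩
  have h1 := h 1 2 3 4 5 6 (by norm_num) (by norm_num) (by norm_num) (by norm_num) (by norm_num) (by norm_num)
  have h2 := h 3 2 1 6 5 4 (by norm_num) (by norm_num) (by norm_num) (by norm_num) (by norm_num) (by norm_num)
  have e0 : q0 1 2 3 4 5 6 = q0 3 2 1 6 5 4 := by norm_num [q0]
  have e1 : q1 1 2 3 4 5 6 = q1 3 2 1 6 5 4 := by norm_num [q1]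
  have e2 : q2 1 2 3 4 5 6 = q2 3 2 1 6 5 4 := by norm_num [q2]
  rw [e0, e1, e2] at h1
  have : Yterm 1 2 3 4 5 6 = Yterm 3 2 1 6 5 4 := h1.trans h2.symm
  norm_num [Yterm] at this
end
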